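/- For every n ≥ 1 and all r, t ∈ {0,1}^n with r ≠ t, the total variation distance between the fermionized parity distributions M_r and M_t is at least 1/2. -/
import Mathlib


/-- The parity function `χ_s(x) = x · s mod 2`. -/
def chi {n : ℕ} (s x : Fin n → ZMod 2) : ZMod 2 := ∑ i, s i * x i

/-- The parity `|x|` of a bitstring: the sum of its bits mod 2. -/
def par {n : ℕ} (x : Fin n → ZMod 2) : ZMod 2 := ∑ i, x i

/-- The fermionized parity distribution `M_s` on `{0,1}^{n+2}`:
`M_s(x,y,z) = 2^{-n}` if `χ_s(x) = y` and `|x| + y = z`, and `0` otherwise. -/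
noncomputable def Mdist {n : ℕ} (s : Fin n → ZMod 2) (x : Fin n → ZMod 2) (y z : ZMod 2) : ℝ :=
  if chi s x = y ∧ par x + y = z then ((2 : ℝ) ^ n)⁻¹ else 0

lemma chi_update {n : ℕ} (s x : Fin n → ZMod 2) (i : Fin n) :
    chi s (Function.update x i (x i + 1)) = chi s x + s i := by
  unfold chi
  rw [← Finset.add_sum_erase _ _ (Finset.mem_univ i),
      ← Finset.add_sum_erase _ (fun j => s j * x j) (Finset.mem_univ i)]
  have h : ∀ j ∈ Finset.univ.erase i,
      s j * Function.update x i (x i + 1) j = s j * x j := by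
    intro j hj
    rw [Function.update_of_ne (Finset.ne_of_mem_erase hj)]
  rw [Finset.sum_congr rfl h, Function.update_self]
  ring

lemma card_diff {n : ℕ} (r t : Fin n → ZMod 2) (hrt : r ≠ t) :
    2 * (Finset.univ.filter (fun x : Fin n → ZMod 2 => chi r x ≠ chi t x)).card
      = 2 ^ n := by
  obtain ⟨i, hi⟩ := Function.ne_iff.mp hrt
  set S := Finset.univ.filter (fun x : Fin n → ZMod 2 => chi r x ≠ chi t x) with hS
  have key : ∀ x : Fin n → ZMod 2,
      chi r (Function.update x i (x i + 1)) = chi t (Function.update x i (x i + 1)) ↔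
        chi r x ≠ chi t x := by
    intro x
    rw [chi_update, chi_update]
    revert hi
    generalize r i = a
    generalize t i = b
    generalize chi r x = c
    generalize chi t x = d
    revert a b c d
    decide
  have hcompl : Sᶜ.card = S.card := by
    apply Finset.card_bij (fun x _ => Function.update x i (x i + 1))
    · intro x hx
      simp only [hS, Finset.mem_compl, Finset.mem_filter, Finset.mem_univ, true_and,
        not_not] at hx ⊢
      intro hcon
      rw [key x] at hcon
      exact hcon hx
    · intro a ha b hb hab
      funext j
      by_cases hj : j = i
      · subst hj
        have := congrFun hab j
        simp only [Function.update_self] at this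
        exact add_right_cancel this
      · have := congrFun hab j
        simpa [Function.update_of_ne hj] using this
    · intro b hb
      refine ⟨Function.update b i (b i + 1), ?_, ?_⟩
      · simp only [hS, Finset.mem_compl, Finset.mem_filter, Finset.mem_univ, true_and,
          not_not] at hb ⊢
        exact (key b).mpr hb
      · simp only [Function.update_idem, Function.update_self]
        rw [show b i + 1 + 1 = b i from by generalize b i = c; revert c; decide,
          Function.update_eq_self]
  have htot : S.card + Sᶜ.card = 2 ^ n := by
    rw [Finset.card_add_card_compl]
    simp [Fintype.card_fun]
  omega

/-- For `r ≠ t`, the total variation distance between `M_r` and `M_t` is at least `1/2`. -/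
theorem tv_Mdist_ge_half (n : ℕ) (hn : 1 ≤ n) (r t : Fin n → ZMod 2) (hrt : r ≠ t) :
    (1 / 2 : ℝ) ≤
      (1 / 2 : ℝ) * ∑ x : Fin n → ZMod 2, ∑ y : ZMod 2, ∑ z : ZMod 2,
        |Mdist r x y z - Mdist t x y z| := by
  set S := Finset.univ.filter (fun x : Fin n → ZMod 2 => chi r x ≠ chi t x) with hS
  have hg : ∀ x ∈ S, 2 * ((2:ℝ) ^ n)⁻¹ ≤
      ∑ y : ZMod 2, ∑ z : ZMod 2, |Mdist r x y z - Mdist t x y z| := by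
    intro x hx
    simp only [hS, Finset.mem_filter, Finset.mem_univ, true_and] at hx
    have h1 : ((2:ℝ) ^ n)⁻¹ ≤ ∑ z : ZMod 2, |Mdist r x (chi r x) z - Mdist t x (chi r x) z| := by
      calc ((2:ℝ) ^ n)⁻¹
          = |Mdist r x (chi r x) (par x + chi r x) - Mdist t x (chi r x) (par x + chi r x)| := by
            simp [Mdist, Ne.symm hx, abs_of_nonneg, (by positivity : (0:ℝ) ≤ ((2:ℝ)^n)⁻¹)]
        _ ≤ _ := Finset.single_le_sum (f := fun z => |Mdist r x (chi r x) z - Mdist t x (chi r x) z|)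
              (fun z _ => abs_nonneg _) (Finset.mem_univ _)
    have h2 : ((2:ℝ) ^ n)⁻¹ ≤ ∑ z : ZMod 2, |Mdist r x (chi t x) z - Mdist t x (chi t x) z| := by
      calc ((2:ℝ) ^ n)⁻¹
          = |Mdist r x (chi t x) (par x + chi t x) - Mdist t x (chi t x) (par x + chi t x)| := by
            simp [Mdist, hx, abs_of_nonneg, (by positivity : (0:ℝ) ≤ ((2:ℝ)^n)⁻¹)]
        _ ≤ _ := Finset.single_le_sum (f := fun z => |Mdist r x (chi t x) z - Mdist t x (chi t x) z|)
              (fun z _ => abs_nonneg _) (Finset.mem_univ _)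
    calc 2 * ((2:ℝ) ^ n)⁻¹ = ((2:ℝ) ^ n)⁻¹ + ((2:ℝ) ^ n)⁻¹ := by ring
      _ ≤ (∑ z : ZMod 2, |Mdist r x (chi r x) z - Mdist t x (chi r x) z|)
          + ∑ z : ZMod 2, |Mdist r x (chi t x) z - Mdist t x (chi t x) z| := add_le_add h1 h2
      _ = ∑ y ∈ ({chi r x, chi t x} : Finset (ZMod 2)),
            ∑ z : ZMod 2, |Mdist r x y z - Mdist t x y z| := by
          rw [Finset.sum_pair hx]
      _ ≤ _ := Finset.sum_le_sum_of_subset_of_nonneg (Finset.subset_univ _)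
            (fun y _ _ => Finset.sum_nonneg fun z _ => abs_nonneg _)
  have hlow : (1 : ℝ) ≤ ∑ x : Fin n → ZMod 2, ∑ y : ZMod 2, ∑ z : ZMod 2,
      |Mdist r x y z - Mdist t x y z| := by
    have hsub : ∑ x ∈ S, ∑ y : ZMod 2, ∑ z : ZMod 2, |Mdist r x y z - Mdist t x y z|
        ≤ ∑ x : Fin n → ZMod 2, ∑ y : ZMod 2, ∑ z : ZMod 2, |Mdist r x y z - Mdist t x y z| :=
      Finset.sum_le_sum_of_subset_of_nonneg (Finset.subset_univ _)
        (fun x _ _ => Finset.sum_nonneg fun y _ => Finset.sum_nonneg fun z _ => abs_nonneg _)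
    have hcard : (S.card : ℝ) * (2 * ((2:ℝ) ^ n)⁻¹) = 1 := by
      have h2S : 2 * S.card = 2 ^ n := card_diff r t hrt
      have : (2 : ℝ) * S.card = 2 ^ n := by exact_mod_cast h2S
      field_simp
      linarith
    calc (1:ℝ) = (S.card : ℝ) * (2 * ((2:ℝ) ^ n)⁻¹) := hcard.symm
      _ = ∑ _x ∈ S, 2 * ((2:ℝ) ^ n)⁻¹ := by rw [Finset.sum_const, nsmul_eq_mul]
      _ ≤ ∑ x ∈ S, ∑ y : ZMod 2, ∑ z : ZMod 2, |Mdist r x y z - Mdist t x y z| :=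
          Finset.sum_le_sum hg
      _ ≤ _ := hsub
  linarith
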